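/- arXiv:2002.05592 — 8 statements merged into one kernel-verified Lean document; each statement's English description precedes it below -/
import Mathlib

section
/- For a finite non-empty sample space Ω, a closed non-empty subset 𝒬 of the set 𝒫 of probability measures on Ω, and any P ∈ 𝒫, the latent weight λ_𝒬(P) equals 1 if and only if P ∈ 𝒬. -/
open scoped BigOperators

/-- A function `P : Ω → ℝ` on a finite sample space is a probability measure if it is
nonnegative and sums to one. -/
def IsProb {Ω : Type*} [Fintype Ω] (P : Ω → ℝ) : Prop :=
  (∀ ω, 0 ≤ P ω) ∧ ∑ ω, P ω = 1

/-- The latent weight of the class `𝒬` in `P`: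
`λ_𝒬(P) = sup { λ | P ≥ λ·Q for some Q ∈ 𝒬 }`. -/
noncomputable def latentWeight {Ω : Type*} [Fintype Ω]
    (𝒬 : Set (Ω → ℝ)) (P : Ω → ℝ) : ℝ :=
  sSup {l : ℝ | ∃ Q ∈ 𝒬, ∀ ω, l * Q ω ≤ P ω}

theorem stmt0 {Ω : Type*} [Fintype Ω] [Nonempty Ω]
    (𝒬 : Set (Ω → ℝ)) (h𝒬prob : ∀ Q ∈ 𝒬, IsProb Q)
    (h𝒬closed : IsClosed 𝒬) (h𝒬ne : 𝒬.Nonempty)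
    (P : Ω → ℝ) (hP : IsProb P) :
    latentWeight 𝒬 P = 1 ↔ P ∈ 𝒬 := by
  classical
  set S := {l : ℝ | ∃ Q ∈ 𝒬, ∀ ω, l * Q ω ≤ P ω} with hS
  -- every element of S is ≤ 1
  have hle1 : ∀ l ∈ S, l ≤ 1 := by
    intro l hl
    obtain ⟨Q, hQ, hlQ⟩ := hl
    have hQs := (h𝒬prob Q hQ).2
    calc l = ∑ ω, l * Q ω := by rw [← Finset.mul_sum, hQs, mul_one]
      _ ≤ ∑ ω, P ω := Finset.sum_le_sum fun ω _ => hlQ ω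
      _ = 1 := hP.2
  have hSne : S.Nonempty := by
    obtain ⟨Q, hQ⟩ := h𝒬ne
    exact ⟨0, Q, hQ, fun ω => by simpa using hP.1 ω⟩
  have hbdd : BddAbove S := ⟨1, hle1⟩
  constructor
  · intro hsup
    -- show P ∈ closure 𝒬 = 𝒬
    rw [← h𝒬closed.closure_eq]
    rw [Metric.mem_closure_iff]
    intro ε hε
    obtain ⟨l, hlS, hl⟩ := exists_lt_of_lt_csSup hSne
      (by rw [← latentWeight, hsup]; linarith : (1 : ℝ) - ε < sSup S)
    obtain ⟨Q, hQ, hlQ⟩ := hlS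
    have hQprob := h𝒬prob Q hQ
    have hl1 : l ≤ 1 := hle1 l ⟨Q, hQ, hlQ⟩
    refine ⟨Q, hQ, ?_⟩
    have hQle1 : ∀ ω, Q ω ≤ 1 := by
      intro ω
      calc Q ω ≤ ∑ ω', Q ω' :=
            Finset.single_le_sum (fun ω' _ => hQprob.1 ω') (Finset.mem_univ ω)
        _ = 1 := hQprob.2
    have hdist : dist P Q ≤ 1 - l := by
      rw [dist_pi_le_iff (by linarith)]
      intro ω
      rw [Real.dist_eq, abs_le]
      constructor
      · -- Q ω - P ω ≤ 1 - l, i.e. -(1-l) ≤ P ω - Q ω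
        have h1 : Q ω - P ω ≤ (1 - l) * Q ω := by
          have := hlQ ω; nlinarith
        have h2 : (1 - l) * Q ω ≤ 1 - l := by
          nlinarith [hQle1 ω, hQprob.1 ω]
        linarith
      · -- P ω - Q ω ≤ 1 - l
        have key : P ω - Q ω = ∑ ω' ∈ Finset.univ.erase ω, (Q ω' - P ω') := by
          have hQsum : Q ω + ∑ ω' ∈ Finset.univ.erase ω, Q ω' = 1 := by
            rw [Finset.add_sum_erase _ _ (Finset.mem_univ ω)]; exact hQprob.2
          have hPsum : P ω + ∑ ω' ∈ Finset.univ.erase ω, P ω' = 1 := by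
            rw [Finset.add_sum_erase _ _ (Finset.mem_univ ω)]; exact hP.2
          rw [Finset.sum_sub_distrib]; linarith
        rw [key]
        calc ∑ ω' ∈ Finset.univ.erase ω, (Q ω' - P ω')
            ≤ ∑ ω' ∈ Finset.univ.erase ω, (1 - l) * Q ω' := by
              refine Finset.sum_le_sum fun ω' _ => ?_
              have := hlQ ω'; nlinarith
          _ = (1 - l) * ∑ ω' ∈ Finset.univ.erase ω, Q ω' := by
              rw [Finset.mul_sum]
          _ ≤ (1 - l) * 1 := by
              refine mul_le_mul_of_nonneg_left ?_ (by linarith)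
              have hQsum : Q ω + ∑ ω' ∈ Finset.univ.erase ω, Q ω' = 1 := by
                rw [Finset.add_sum_erase _ _ (Finset.mem_univ ω)]; exact hQprob.2
              nlinarith [hQprob.1 ω]
          _ = 1 - l := mul_one _
    calc dist P Q ≤ 1 - l := hdist
      _ < ε := by linarith
  · intro hP𝒬
    have h1S : (1 : ℝ) ∈ S := ⟨P, hP𝒬, fun ω => by simp⟩
    exact le_antisymm (csSup_le hSne hle1) (le_csSup hbdd h1S)
end

section
/- For a finite non-empty sample space Ω, a closed non-empty subset 𝒬 of the probability measures on Ω, and any probability measure P on Ω, the latent weight satisfies λ_𝒬(P) = sup_{Q ∈ 𝒬} min_{ω ∈ Ω} P(ω)/Q(ω) (with any division by zero, including zero-over-zero, interpreted as +∞), and this supremum is achieved: there exists Q ∈ 𝒬 such that P(ω) ≥ λ_𝒬(P)·Q(ω) for all ω ∈ Ω. -/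
/-!
A class `𝒬` of probability vectors is a closed subset of the standard simplex, hence compact.
The set of admissible weights `{l | l • Q ≤ P for some Q ∈ 𝒬}` is then the projection to `ℝ`
of a closed subset of `ℝ × 𝒬`, so it is closed; it contains `0` and is bounded by `1`, so it
contains its supremum, which is the attained maximum. For nonnegative `P` and `Q`, the
condition `l • Q ≤ P` says exactly that `l ≤ min_ω P(ω)/Q(ω)` with `P(ω)/0 = +∞`, which turns
the maximum into the supremum over `𝒬` of these minima.
-/

open scoped BigOperators

namespace LatentWeight

variable {Ω : Type*} {𝒬 : Set (Ω → ℝ)} {P Q : Ω → ℝ}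

def weights (𝒬 : Set (Ω → ℝ)) (P : Ω → ℝ) : Set ℝ :=
  {l : ℝ | ∃ Q ∈ 𝒬, ∀ ω, l * Q ω ≤ P ω}

noncomputable def minRatio (P Q : Ω → ℝ) : EReal :=
  ⨅ ω, if Q ω = 0 then (⊤ : EReal) else ((P ω / Q ω : ℝ) : EReal)

theorem zero_mem_weights (h𝒬 : 𝒬.Nonempty) (hP : 0 ≤ P) :
    (0 : ℝ) ∈ weights 𝒬 P :=
  let ⟨Q, hQ⟩ := h𝒬
  ⟨Q, hQ, fun ω => by simpa using hP ω⟩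

theorem isClosed_weights (h𝒬 : IsCompact 𝒬) :
    IsClosed (weights 𝒬 P) := by
  have : CompactSpace 𝒬 := isCompact_iff_compactSpace.mp h𝒬
  have hC : IsClosed {p : ℝ × 𝒬 | ∀ ω, p.1 * (p.2 : Ω → ℝ) ω ≤ P ω} := by
    simp only [Set.ofPred_forall]
    exact isClosed_iInter fun ω => isClosed_le
      (continuous_fst.mul ((continuous_apply ω).comp (continuous_subtype_val.comp continuous_snd)))
      continuous_const
  have hproj : weights 𝒬 P = Prod.fst '' {p : ℝ × 𝒬 | ∀ ω, p.1 * (p.2 : Ω → ℝ) ω ≤ P ω} := by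
    ext l
    simp [weights]
  rw [hproj]
  exact isClosedMap_fst_of_compactSpace _ hC

theorem coe_le_minRatio_iff (hP : 0 ≤ P) (hQ : 0 ≤ Q) {l : ℝ} :
    (l : EReal) ≤ minRatio P Q ↔ ∀ ω, l * Q ω ≤ P ω := by
  refine le_iInf_iff.trans (forall_congr' fun ω => ?_)
  by_cases h0 : Q ω = 0
  · simpa [h0] using hP ω
  · rw [if_neg h0, EReal.coe_le_coe_iff, le_div_iff₀ (lt_of_le_of_ne (hQ ω) (Ne.symm h0))]

variable [Fintype Ω]

theorem le_one_of_mem_weights (h𝒬 : ∀ Q ∈ 𝒬, ∑ ω, Q ω = 1)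
    (hP : ∑ ω, P ω = 1) {l : ℝ} (hl : l ∈ weights 𝒬 P) : l ≤ 1 := by
  obtain ⟨Q, hQ, hle⟩ := hl
  have hsum : ∑ ω, l * Q ω ≤ ∑ ω, P ω := Finset.sum_le_sum fun ω _ => hle ω
  rwa [← Finset.mul_sum, h𝒬 Q hQ, hP, mul_one] at hsum

theorem bddAbove_weights (h𝒬 : ∀ Q ∈ 𝒬, ∑ ω, Q ω = 1)
    (hP : ∑ ω, P ω = 1) : BddAbove (weights 𝒬 P) :=
  ⟨1, fun _ => le_one_of_mem_weights h𝒬 hP⟩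

theorem isCompact_of_isProb (h𝒬prob : ∀ Q ∈ 𝒬, IsProb Q)
    (h𝒬closed : IsClosed 𝒬) : IsCompact 𝒬 :=
  (isCompact_stdSimplex ℝ Ω).of_isClosed_subset h𝒬closed h𝒬prob

theorem latentWeight_mem_weights (h𝒬prob : ∀ Q ∈ 𝒬, IsProb Q)
    (h𝒬closed : IsClosed 𝒬) (h𝒬ne : 𝒬.Nonempty) (hP : IsProb P) :
    latentWeight 𝒬 P ∈ weights 𝒬 P :=
  (isClosed_weights (isCompact_of_isProb h𝒬prob h𝒬closed)).csSup_mem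
    ⟨0, zero_mem_weights h𝒬ne hP.1⟩ (bddAbove_weights (fun Q hQ => (h𝒬prob Q hQ).2) hP.2)

theorem minRatio_le_latentWeight (hbdd : BddAbove (weights 𝒬 P)) (hP : 0 ≤ P) (hQ𝒬 : Q ∈ 𝒬)
    (hQ : 0 ≤ Q) :
    minRatio P Q ≤ latentWeight 𝒬 P := by
  by_contra! hlt
  obtain ⟨l, hlam, hl⟩ := EReal.lt_iff_exists_real_btwn.mp hlt
  have hmem : l ∈ weights 𝒬 P := ⟨Q, hQ𝒬, (coe_le_minRatio_iff hP hQ).mp hl.le⟩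
  exact (le_csSup hbdd hmem).not_gt (EReal.coe_lt_coe_iff.mp hlam)

end LatentWeight

open LatentWeight

theorem stmt1_general {Ω : Type*} [Fintype Ω]
    (𝒬 : Set (Ω → ℝ)) (h𝒬prob : ∀ Q ∈ 𝒬, IsProb Q)
    (h𝒬closed : IsClosed 𝒬) (h𝒬ne : 𝒬.Nonempty)
    (P : Ω → ℝ) (hP : IsProb P) :
    ((latentWeight 𝒬 P : EReal) =
        ⨆ Q ∈ 𝒬, ⨅ ω : Ω, (if Q ω = 0 then (⊤ : EReal) else ((P ω / Q ω : ℝ) : EReal))) ∧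
    ∃ Q ∈ 𝒬, ∀ ω, latentWeight 𝒬 P * Q ω ≤ P ω := by
  obtain ⟨Q₀, hQ₀, hQ₀le⟩ := latentWeight_mem_weights h𝒬prob h𝒬closed h𝒬ne hP
  refine ⟨le_antisymm ?_ (iSup₂_le fun Q hQ => ?_), Q₀, hQ₀, hQ₀le⟩
  · exact le_iSup₂_of_le Q₀ hQ₀ ((coe_le_minRatio_iff hP.1 (h𝒬prob Q₀ hQ₀).1).mpr hQ₀le)
  · exact minRatio_le_latentWeight (bddAbove_weights (fun Q hQ => (h𝒬prob Q hQ).2) hP.2)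
      hP.1 hQ (h𝒬prob Q hQ).1

/-- `λ_𝒬(P) = sup_{Q ∈ 𝒬} min_{ω ∈ Ω} P(ω)/Q(ω)`, with any division by zero (including
zero-over-zero) interpreted as `+∞`, and the supremum is achieved: some `Q ∈ 𝒬` satisfies
`P ≥ λ_𝒬(P)·Q`. -/
theorem stmt1 {Ω : Type*} [Fintype Ω] [Nonempty Ω]
    (𝒬 : Set (Ω → ℝ)) (h𝒬prob : ∀ Q ∈ 𝒬, IsProb Q)
    (h𝒬closed : IsClosed 𝒬) (h𝒬ne : 𝒬.Nonempty)
    (P : Ω → ℝ) (hP : IsProb P) :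
    ((latentWeight 𝒬 P : EReal) =
        ⨆ Q ∈ 𝒬, ⨅ ω : Ω, (if Q ω = 0 then (⊤ : EReal) else ((P ω / Q ω : ℝ) : EReal))) ∧
    ∃ Q ∈ 𝒬, ∀ ω, latentWeight 𝒬 P * Q ω ≤ P ω :=
  stmt1_general 𝒬 h𝒬prob h𝒬closed h𝒬ne P hP
end

section
/- For a finite non-empty sample space Ω, a closed non-empty subset 𝒬 of the probability measures on Ω, and any probability measure P on Ω, there exist Q ∈ 𝒬 and a probability measure R on Ω such that P = λ_𝒬(P)·Q + (1 − λ_𝒬(P))·R. -/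
open scoped BigOperators

/-!
The pairs `(λ, Q) ∈ [0, 1] × 𝒬` with `λ • Q ≤ P` form a compact set, so `λ` attains its maximum
on it, and that maximum is `λ_𝒬(P)`. The residual `(P - λ_𝒬(P) • Q) / (1 - λ_𝒬(P))` is then a
probability measure `R`; when `λ_𝒬(P) = 1`, `Q ≤ P` forces `Q = P` and `R = P` will do.
-/

open Set

namespace IsProb

variable {Ω : Type*} [Fintype Ω] {P Q : Ω → ℝ}

lemma le_one (hP : IsProb P) (ω : Ω) : P ω ≤ 1 :=
  hP.2 ▸ Finset.single_le_sum (fun i _ => hP.1 i) (Finset.mem_univ ω)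

lemma le_one_of_mul_le (hP : IsProb P) (hQ : IsProb Q) {l : ℝ} (h : ∀ ω, l * Q ω ≤ P ω) :
    l ≤ 1 := by
  have hsum : ∑ ω, l * Q ω ≤ ∑ ω, P ω := Finset.sum_le_sum fun ω _ => h ω
  rwa [← Finset.mul_sum, hQ.2, hP.2, mul_one] at hsum

lemma eq_of_le (hP : IsProb P) (hQ : IsProb Q) (h : ∀ ω, Q ω ≤ P ω) : Q = P := by
  funext ω
  exact (Finset.sum_eq_sum_iff_of_le fun i _ => h i).1 (hQ.2.trans hP.2.symm) ω
    (Finset.mem_univ ω)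

lemma exists_eq_mul_add_one_sub_mul (hP : IsProb P) (hQ : IsProb Q) {l : ℝ} (hl : 0 ≤ l)
    (h : ∀ ω, l * Q ω ≤ P ω) :
    ∃ R : Ω → ℝ, IsProb R ∧ ∀ ω, P ω = l * Q ω + (1 - l) * R ω := by
  rcases (le_one_of_mul_le hP hQ h).eq_or_lt with rfl | hl1
  · have hQP : Q = P := eq_of_le hP hQ (by simpa using h)
    exact ⟨P, hP, fun ω => by rw [hQP]; ring⟩
  have hne : 1 - l ≠ 0 := by linarith
  refine ⟨fun ω => (P ω - l * Q ω) / (1 - l), ⟨fun ω => ?_, ?_⟩, fun ω => ?_⟩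
  · exact div_nonneg (sub_nonneg.2 (h ω)) (by linarith)
  · rw [← Finset.sum_div, Finset.sum_sub_distrib, ← Finset.mul_sum, hP.2, hQ.2, mul_one,
      div_self hne]
  · rw [mul_div_cancel₀ _ hne]
    ring

end IsProb

lemma isClosed_setOf_mul_le {Ω : Type*} (P : Ω → ℝ) :
    IsClosed {p : ℝ × (Ω → ℝ) | ∀ ω, p.1 * p.2 ω ≤ P ω} := by
  simp only [ofPred_forall]
  exact isClosed_iInter fun ω =>
    isClosed_le (continuous_fst.mul ((continuous_apply ω).comp continuous_snd)) continuous_const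

section LatentWeight

variable {Ω : Type*} [Fintype Ω] {𝒬 : Set (Ω → ℝ)} {P : Ω → ℝ}

lemma isCompact_of_forall_isProb (h𝒬prob : ∀ Q ∈ 𝒬, IsProb Q) (h𝒬closed : IsClosed 𝒬) :
    IsCompact 𝒬 :=
  isCompact_Icc.of_isClosed_subset h𝒬closed fun Q hQ =>
    ⟨(h𝒬prob Q hQ).1, (h𝒬prob Q hQ).le_one⟩

lemma isGreatest_latentWeight (h𝒬prob : ∀ Q ∈ 𝒬, IsProb Q) (h𝒬closed : IsClosed 𝒬)
    (h𝒬ne : 𝒬.Nonempty) (hP : IsProb P) :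
    IsGreatest {l : ℝ | ∃ Q ∈ 𝒬, ∀ ω, l * Q ω ≤ P ω} (latentWeight 𝒬 P) := by
  set A := (Icc (0 : ℝ) 1 ×ˢ 𝒬) ∩ {p | ∀ ω, p.1 * p.2 ω ≤ P ω}
  have hA : IsCompact A :=
    (isCompact_Icc.prod (isCompact_of_forall_isProb h𝒬prob h𝒬closed)).inter_right
      (isClosed_setOf_mul_le P)
  obtain ⟨Q₀, hQ₀⟩ := h𝒬ne
  have hA₀ : ((0 : ℝ), Q₀) ∈ A := ⟨⟨⟨le_rfl, zero_le_one⟩, hQ₀⟩, fun ω => by simpa using hP.1 ω⟩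
  obtain ⟨⟨l, Q⟩, ⟨⟨hl, hQ⟩, hlQ⟩, hmax⟩ := hA.exists_isMaxOn ⟨_, hA₀⟩ continuous_fst.continuousOn
  have hgreatest : IsGreatest {l : ℝ | ∃ Q ∈ 𝒬, ∀ ω, l * Q ω ≤ P ω} l := by
    refine ⟨⟨Q, hQ, hlQ⟩, ?_⟩
    rintro l' ⟨Q', hQ', hl'Q'⟩
    rcases le_total l' 0 with hl' | hl'
    · exact hl'.trans hl.1
    · exact isMaxOn_iff.1 hmax (l', Q')
        ⟨⟨⟨hl', hP.le_one_of_mul_le (h𝒬prob Q' hQ') hl'Q'⟩, hQ'⟩, hl'Q'⟩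
  rwa [latentWeight, hgreatest.csSup_eq]

end LatentWeight

theorem stmt2_general {Ω : Type*} [Fintype Ω]
    (𝒬 : Set (Ω → ℝ)) (h𝒬prob : ∀ Q ∈ 𝒬, IsProb Q)
    (h𝒬closed : IsClosed 𝒬) (h𝒬ne : 𝒬.Nonempty)
    (P : Ω → ℝ) (hP : IsProb P) :
    ∃ Q ∈ 𝒬, ∃ R : Ω → ℝ, IsProb R ∧
      ∀ ω, P ω = latentWeight 𝒬 P * Q ω + (1 - latentWeight 𝒬 P) * R ω := by
  have hmax := isGreatest_latentWeight h𝒬prob h𝒬closed h𝒬ne hP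
  obtain ⟨Q, hQ, hle⟩ := hmax.1
  have hnonneg : 0 ≤ latentWeight 𝒬 P :=
    hmax.2 ⟨Q, hQ, fun ω => by simpa using hP.1 ω⟩
  exact ⟨Q, hQ, hP.exists_eq_mul_add_one_sub_mul (h𝒬prob Q hQ) hnonneg hle⟩

/-- There exist `Q ∈ 𝒬` and a probability measure `R` on `Ω` with
`P = λ_𝒬(P)·Q + (1 − λ_𝒬(P))·R`. -/
theorem stmt2 {Ω : Type*} [Fintype Ω] [Nonempty Ω]
    (𝒬 : Set (Ω → ℝ)) (h𝒬prob : ∀ Q ∈ 𝒬, IsProb Q)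
    (h𝒬closed : IsClosed 𝒬) (h𝒬ne : 𝒬.Nonempty)
    (P : Ω → ℝ) (hP : IsProb P) :
    ∃ Q ∈ 𝒬, ∃ R : Ω → ℝ, IsProb R ∧
      ∀ ω, P ω = latentWeight 𝒬 P * Q ω + (1 - latentWeight 𝒬 P) * R ω :=
  stmt2_general 𝒬 h𝒬prob h𝒬closed h𝒬ne P hP
end

section
/- Let Ω be a finite non-empty sample space, 𝒬 a closed, convex, non-empty subset of the probability measures on Ω, and P a probability measure on Ω with λ_𝒬(P) < 1. If Q ∈ 𝒬 and the probability measure R satisfy P = λ_𝒬(P)·Q + (1 − λ_𝒬(P))·R, then λ_𝒬(R) = 0; in particular, R ∉ 𝒬. -/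
open scoped BigOperators

/-! If `λ_𝒬(R) > 0`, some `ε·Q'` with `Q' ∈ 𝒬`, `ε > 0` sits below `R`. Then
`P = λ·Q + (1 - λ)·R ≥ λ·Q + (1 - λ)ε·Q'`, and by convexity the right-hand side is
`(λ + (1 - λ)ε)·Q''` with `Q'' ∈ 𝒬`, contradicting the maximality of `λ = λ_𝒬(P)`
since `λ < 1`. -/

section LatentWeight

variable {Ω : Type*} {𝒬 : Set (Ω → ℝ)}

lemma Convex.exists_add_smul_le_add (h𝒬 : Convex ℝ 𝒬) {P₁ P₂ Q₁ Q₂ : Ω → ℝ} {a b : ℝ}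
    (hQ₁ : Q₁ ∈ 𝒬) (hQ₂ : Q₂ ∈ 𝒬) (ha : 0 ≤ a) (hb : 0 ≤ b) (hab : 0 < a + b)
    (h₁ : ∀ ω, a * Q₁ ω ≤ P₁ ω) (h₂ : ∀ ω, b * Q₂ ω ≤ P₂ ω) :
    ∃ Q ∈ 𝒬, ∀ ω, (a + b) * Q ω ≤ P₁ ω + P₂ ω := by
  refine ⟨(a / (a + b)) • Q₁ + (b / (a + b)) • Q₂,
    h𝒬 hQ₁ hQ₂ (by positivity) (by positivity) (by field_simp), fun ω => ?_⟩
  have hcombo : (a + b) * ((a / (a + b)) • Q₁ + (b / (a + b)) • Q₂) ω = a * Q₁ ω + b * Q₂ ω := by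
    simp only [Pi.add_apply, Pi.smul_apply, smul_eq_mul]
    field_simp
  linarith [h₁ ω, h₂ ω]

variable [Fintype Ω]

lemma bddAbove_latentWeight_set (h𝒬 : ∀ Q ∈ 𝒬, IsProb Q) (P : Ω → ℝ) :
    BddAbove {l : ℝ | ∃ Q ∈ 𝒬, ∀ ω, l * Q ω ≤ P ω} := by
  refine ⟨∑ ω, P ω, ?_⟩
  rintro l ⟨Q, hQ, hle⟩
  calc l = ∑ ω, l * Q ω := by rw [← Finset.mul_sum, (h𝒬 Q hQ).2, mul_one]
    _ ≤ ∑ ω, P ω := Finset.sum_le_sum fun ω _ => hle ω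

lemma le_latentWeight (h𝒬 : ∀ Q ∈ 𝒬, IsProb Q) {P Q : Ω → ℝ} {l : ℝ} (hQ : Q ∈ 𝒬)
    (hle : ∀ ω, l * Q ω ≤ P ω) : l ≤ latentWeight 𝒬 P :=
  le_csSup (bddAbove_latentWeight_set h𝒬 P) ⟨Q, hQ, hle⟩

lemma latentWeight_nonneg (h𝒬 : ∀ Q ∈ 𝒬, IsProb Q) {P Q : Ω → ℝ} (hQ : Q ∈ 𝒬)
    (hP : ∀ ω, 0 ≤ P ω) : 0 ≤ latentWeight 𝒬 P :=
  le_latentWeight h𝒬 hQ fun ω => by simpa using hP ω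

lemma exists_smul_le_of_lt_latentWeight {P Q : Ω → ℝ} {l : ℝ} (hQ : Q ∈ 𝒬)
    (hP : ∀ ω, 0 ≤ P ω) (hl : l < latentWeight 𝒬 P) :
    ∃ l' > l, ∃ Q' ∈ 𝒬, ∀ ω, l' * Q' ω ≤ P ω := by
  have hne : {l : ℝ | ∃ Q ∈ 𝒬, ∀ ω, l * Q ω ≤ P ω}.Nonempty :=
    ⟨0, Q, hQ, fun ω => by simpa using hP ω⟩
  obtain ⟨l', hl'mem, hll'⟩ := exists_lt_of_lt_csSup hne hl
  exact ⟨l', hll', hl'mem⟩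

end LatentWeight

theorem stmt3_general {Ω : Type*} [Fintype Ω]
    (𝒬 : Set (Ω → ℝ)) (h𝒬prob : ∀ Q ∈ 𝒬, IsProb Q)
    (h𝒬convex : Convex ℝ 𝒬)
    (P : Ω → ℝ) (hP : IsProb P) (hlt : latentWeight 𝒬 P < 1)
    (Q : Ω → ℝ) (hQ : Q ∈ 𝒬) (R : Ω → ℝ) (hR : IsProb R)
    (hmix : ∀ ω, P ω = latentWeight 𝒬 P * Q ω + (1 - latentWeight 𝒬 P) * R ω) :
    latentWeight 𝒬 R = 0 ∧ R ∉ 𝒬 := by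
  set lam := latentWeight 𝒬 P
  have hlam : 0 ≤ lam := latentWeight_nonneg h𝒬prob hQ hP.1
  have hRle : latentWeight 𝒬 R ≤ 0 := by
    by_contra! hRpos
    obtain ⟨ε, hε, Q', hQ', hεQ'⟩ := exists_smul_le_of_lt_latentWeight hQ hR.1 hRpos
    have hgap : 0 < (1 - lam) * ε := mul_pos (by linarith) hε
    obtain ⟨Q'', hQ'', hle⟩ := h𝒬convex.exists_add_smul_le_add hQ hQ' hlam hgap.le
      (by linarith) (P₁ := fun ω => lam * Q ω) (P₂ := fun ω => (1 - lam) * R ω)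
      (fun ω => le_rfl) (fun ω => by rw [mul_assoc]; gcongr; exact hεQ' ω)
    have := le_latentWeight h𝒬prob hQ'' fun ω => (hle ω).trans (hmix ω).ge
    linarith
  have hRzero : latentWeight 𝒬 R = 0 := le_antisymm hRle (latentWeight_nonneg h𝒬prob hQ hR.1)
  refine ⟨hRzero, fun hRmem => ?_⟩
  have := le_latentWeight h𝒬prob hRmem (P := R) (l := 1) fun ω => (one_mul _).le
  linarith

/-- If `𝒬` is moreover convex and `λ_𝒬(P) < 1`, then the residual `R` in the mixture
representation `P = λ_𝒬(P)·Q + (1 − λ_𝒬(P))·R` satisfies `λ_𝒬(R) = 0`; in particular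
`R ∉ 𝒬`. -/
theorem stmt3 {Ω : Type*} [Fintype Ω] [Nonempty Ω]
    (𝒬 : Set (Ω → ℝ)) (h𝒬prob : ∀ Q ∈ 𝒬, IsProb Q)
    (h𝒬closed : IsClosed 𝒬) (h𝒬ne : 𝒬.Nonempty) (h𝒬convex : Convex ℝ 𝒬)
    (P : Ω → ℝ) (hP : IsProb P) (hlt : latentWeight 𝒬 P < 1)
    (Q : Ω → ℝ) (hQ : Q ∈ 𝒬) (R : Ω → ℝ) (hR : IsProb R)
    (hmix : ∀ ω, P ω = latentWeight 𝒬 P * Q ω + (1 - latentWeight 𝒬 P) * R ω) :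
    latentWeight 𝒬 R = 0 ∧ R ∉ 𝒬 :=
  stmt3_general 𝒬 h𝒬prob h𝒬convex P hP hlt Q hQ R hR hmix
end

section
/- Let 𝒳 be a finite set of cardinality k > 1, d > 1 finite, and let ℰ denote the class of exchangeable probability measures on 𝒳^d. For every probability measure P on 𝒳^d, the exchangeable weight satisfies λ_ℰ(P) = Σ_{x ∈ 𝒳^d} min_{y ∈ [x]} P(y) = Σ_{z ∈ [𝒳^d]} |z| · min_{x ∈ z} P(x), where [x] is the permutation-equivalence class of x and [𝒳^d] is the set of all permutation-equivalence classes. -/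
open scoped BigOperators Classical

/-- A probability measure on `𝒳^ι` is exchangeable if it is invariant under all
coordinate permutations. -/
def Exchangeable {ι 𝒳 : Type*} (Q : (ι → 𝒳) → ℝ) : Prop :=
  ∀ σ : Equiv.Perm ι, ∀ x : ι → 𝒳, Q (x ∘ σ) = Q x

/-- The exchangeable weight `λ_ℰ(P)`: the supremum of `λ` such that `P ≥ λ·Q` pointwise
for some exchangeable probability measure `Q`. -/
noncomputable def exchWeight {ι 𝒳 : Type*} [Fintype ι] [Fintype 𝒳]
    (P : (ι → 𝒳) → ℝ) : ℝ :=
  sSup {l : ℝ | ∃ Q : (ι → 𝒳) → ℝ, IsProb Q ∧ Exchangeable Q ∧ ∀ x, l * Q x ≤ P x}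

/-- The permutation-equivalence class `[x]` of `x`, as a set. -/
def permSet {ι 𝒳 : Type*} (x : ι → 𝒳) : Set (ι → 𝒳) :=
  {y | ∃ σ : Equiv.Perm ι, y = x ∘ σ}

/-- The permutation-equivalence class `[x]` of `x`, as a finset. -/
noncomputable def permClass {ι 𝒳 : Type*} [Fintype ι] (x : ι → 𝒳) :
    Finset (ι → 𝒳) :=
  Finset.univ.image (fun σ : Equiv.Perm ι => x ∘ σ)


section Aux

variable {ι 𝒳 : Type*} [Fintype ι] [Fintype 𝒳]

lemma permSet_eq_coe (x : ι → 𝒳) : permSet x = ↑(permClass x) := by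
  ext y
  simp only [permSet, permClass, Set.mem_setOf_eq, Finset.coe_image, Finset.coe_univ,
    Set.image_univ, Set.mem_range]
  exact ⟨fun ⟨σ, h⟩ => ⟨σ, h.symm⟩, fun ⟨σ, h⟩ => ⟨σ, h.symm⟩⟩

lemma mem_permSet_self (x : ι → 𝒳) : x ∈ permSet x :=
  ⟨Equiv.refl ι, rfl⟩

lemma comp_mem_permSet (x : ι → 𝒳) (σ : Equiv.Perm ι) : x ∘ σ ∈ permSet x :=
  ⟨σ, rfl⟩

lemma permSet_comp (x : ι → 𝒳) (σ : Equiv.Perm ι) : permSet (x ∘ σ) = permSet x := by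
  ext y
  constructor
  · rintro ⟨τ, rfl⟩
    exact ⟨τ.trans σ, by ext i; simp [Function.comp]⟩
  · rintro ⟨τ, rfl⟩
    exact ⟨τ.trans σ.symm, by ext i; simp [Function.comp]⟩

lemma permClass_comp (x : ι → 𝒳) (σ : Equiv.Perm ι) : permClass (x ∘ σ) = permClass x :=
  Finset.coe_injective (by rw [← permSet_eq_coe, ← permSet_eq_coe, permSet_comp])

lemma permSet_finite (x : ι → 𝒳) : (permSet x).Finite := by
  rw [permSet_eq_coe]; exact (permClass x).finite_toSet

lemma image_nonempty (P : (ι → 𝒳) → ℝ) (x : ι → 𝒳) : (P '' permSet x).Nonempty :=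
  ⟨P x, x, mem_permSet_self x, rfl⟩

lemma image_finite (P : (ι → 𝒳) → ℝ) (x : ι → 𝒳) : (P '' permSet x).Finite :=
  (permSet_finite x).image P

lemma mval_le (P : (ι → 𝒳) → ℝ) (x : ι → 𝒳) (σ : Equiv.Perm ι) :
    sInf (P '' permSet x) ≤ P (x ∘ σ) :=
  csInf_le (image_finite P x).bddBelow ⟨x ∘ σ, comp_mem_permSet x σ, rfl⟩

lemma mval_le_self (P : (ι → 𝒳) → ℝ) (x : ι → 𝒳) : sInf (P '' permSet x) ≤ P x := by
  have := mval_le P x (Equiv.refl ι); simpa using this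

lemma mval_nonneg {P : (ι → 𝒳) → ℝ} (hP : ∀ y, 0 ≤ P y) (x : ι → 𝒳) :
    0 ≤ sInf (P '' permSet x) := by
  obtain ⟨y, -, hy⟩ := (image_nonempty P x).csInf_mem (image_finite P x)
  rw [← hy]; exact hP y

lemma mval_comp (P : (ι → 𝒳) → ℝ) (x : ι → 𝒳) (σ : Equiv.Perm ι) :
    sInf (P '' permSet (x ∘ σ)) = sInf (P '' permSet x) := by
  rw [permSet_comp]

lemma mem_permClass_iff (x c : ι → 𝒳) : x ∈ permClass c ↔ permClass x = permClass c := by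
  constructor
  · intro hx
    rw [← Finset.mem_coe, ← permSet_eq_coe] at hx
    obtain ⟨σ, rfl⟩ := hx
    exact permClass_comp c σ
  · intro h
    rw [← h, ← Finset.mem_coe, ← permSet_eq_coe]
    exact mem_permSet_self x

end Aux

/-- Theorem 3 (formula): `λ_ℰ(P) = Σ_{x ∈ 𝒳^d} min_{y ∈ [x]} P(y)
= Σ_{z ∈ [𝒳^d]} |z| · min_{x ∈ z} P(x)`. -/
theorem stmt6 {𝒳 : Type*} [Fintype 𝒳] (hk : 1 < Fintype.card 𝒳)
    {d : ℕ} (hd : 1 < d) (P : (Fin d → 𝒳) → ℝ) (hP : IsProb P) :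
    exchWeight P = ∑ x : Fin d → 𝒳, sInf (P '' permSet x) ∧
    exchWeight P = ∑ z ∈ Finset.univ.image (permClass (ι := Fin d) (𝒳 := 𝒳)),
      (z.card : ℝ) * sInf (P '' (z : Set (Fin d → 𝒳))) := by


  set S : ℝ := ∑ x : Fin d → 𝒳, sInf (P '' permSet x) with hS
  have hXne : Nonempty 𝒳 := Fintype.card_pos_iff.mp (by omega)
  have hcard : (0:ℝ) < (Fintype.card (Fin d → 𝒳) : ℝ) := by
    exact_mod_cast Fintype.card_pos
  have hW : exchWeight P = sSup {l : ℝ | ∃ Q : (Fin d → 𝒳) → ℝ,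
      IsProb Q ∧ Exchangeable Q ∧ ∀ x, l * Q x ≤ P x} := by unfold exchWeight; congr!
  have h0 : (0:ℝ) ∈ {l : ℝ | ∃ Q : (Fin d → 𝒳) → ℝ,
      IsProb Q ∧ Exchangeable Q ∧ ∀ x, l * Q x ≤ P x} := by
    refine ⟨fun _ => (Fintype.card (Fin d → 𝒳) : ℝ)⁻¹, ⟨fun _ => by positivity, ?_⟩,
      fun σ x => rfl, fun x => by simpa using hP.1 x⟩
    rw [Finset.sum_const, Finset.card_univ, nsmul_eq_mul, mul_inv_cancel₀ (ne_of_gt hcard)]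
  have hub : ∀ l ∈ {l : ℝ | ∃ Q : (Fin d → 𝒳) → ℝ,
      IsProb Q ∧ Exchangeable Q ∧ ∀ x, l * Q x ≤ P x}, l ≤ S := by
    rintro l ⟨Q, hQ, hE, hle⟩
    have key : ∀ x, l * Q x ≤ sInf (P '' permSet x) := by
      intro x
      refine le_csInf (image_nonempty P x) ?_
      rintro p ⟨y, ⟨σ, rfl⟩, rfl⟩
      calc l * Q x = l * Q (x ∘ σ) := by rw [hE σ x]
        _ ≤ P (x ∘ σ) := hle _
    calc l = l * ∑ x, Q x := by rw [hQ.2, mul_one]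
      _ = ∑ x, l * Q x := Finset.mul_sum _ _ _
      _ ≤ S := Finset.sum_le_sum fun x _ => key x
  have hbdd : BddAbove {l : ℝ | ∃ Q : (Fin d → 𝒳) → ℝ,
      IsProb Q ∧ Exchangeable Q ∧ ∀ x, l * Q x ≤ P x} := ⟨S, hub⟩
  have hS0 : 0 ≤ S := Finset.sum_nonneg fun x _ => mval_nonneg hP.1 x
  have hmain : exchWeight P = S := by
    rw [hW]
    rcases eq_or_lt_of_le hS0 with h | h
    · refine le_antisymm (csSup_le ⟨0, h0⟩ hub) ?_
      rw [← h]; exact le_csSup hbdd h0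
    · refine le_antisymm (csSup_le ⟨0, h0⟩ hub) (le_csSup hbdd ?_)
      refine ⟨fun x => sInf (P '' permSet x) / S, ⟨fun x => ?_, ?_⟩, ?_, ?_⟩
      · exact div_nonneg (mval_nonneg hP.1 x) hS0
      · rw [← Finset.sum_div, ← hS, div_self (ne_of_gt h)]
      · intro σ x
        show sInf (P '' permSet (x ∘ σ)) / S = _
        rw [mval_comp]
      · intro x
        rw [mul_div_cancel₀ _ (ne_of_gt h)]
        exact mval_le_self P x
  refine ⟨hmain, ?_⟩
  rw [hmain, hS]
  symm
  refine Finset.sum_image' _ ?_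
  intro c _
  have hfilter : (Finset.univ.filter fun x => permClass x = permClass c) = permClass c := by
    ext x; simp [mem_permClass_iff]
  rw [hfilter]
  have hconst : ∀ x ∈ permClass c,
      sInf (P '' permSet x) = sInf (P '' (permClass c : Set (Fin d → 𝒳))) := by
    intro x hx
    rw [← Finset.mem_coe, ← permSet_eq_coe] at hx
    obtain ⟨σ, rfl⟩ := hx
    rw [← permSet_eq_coe, permSet_comp]
  rw [Finset.sum_congr rfl hconst, Finset.sum_const, nsmul_eq_mul]
end

section
/- Let 𝒳 be a finite set of cardinality k > 1 and d > 1 finite. If P = β·Q′ + (1−β)·R′, where 0 ≤ β ≤ 1, Q′ is an exchangeable probability measure on 𝒳^d, and R′ is a probability measure on 𝒳^d that is not exchangeable and satisfies λ_ℰ(R′) = 0, then λ_ℰ(P) = β. -/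
open scoped BigOperators Classical

/-! `P ≥ β Q′` gives `λ_ℰ(P) ≥ β`. Conversely, if `P ≥ l Q` with `Q` exchangeable and `l > β`,
then the positive part of `l Q − β Q′` is exchangeable, lies below `(1 − β) R′` and has mass at
least `l − β`; normalised, it shows `λ_ℰ(R′) ≥ (l − β)/(1 − β) > 0`. -/

theorem IsProb.mul_le_sum {Ω : Type*} [Fintype Ω] {Q P : Ω → ℝ} {l : ℝ} (hQ : IsProb Q)
    (hlQ : ∀ x, l * Q x ≤ P x) : l ≤ ∑ x, P x := by
  calc l = ∑ x, l * Q x := by rw [← Finset.mul_sum, hQ.2, mul_one]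
    _ ≤ ∑ x, P x := Finset.sum_le_sum fun x _ => hlQ x

section

variable {ι 𝒳 : Type*}

theorem Exchangeable.map₂ {f g : (ι → 𝒳) → ℝ} (hf : Exchangeable f) (hg : Exchangeable g)
    (φ : ℝ → ℝ → ℝ) : Exchangeable fun x => φ (f x) (g x) := by
  intro σ x
  simp only [hf σ x, hg σ x]

theorem Exchangeable.map {f : (ι → 𝒳) → ℝ} (hf : Exchangeable f) (φ : ℝ → ℝ) :
    Exchangeable fun x => φ (f x) :=
  hf.map₂ hf fun a _ => φ a

-- `exchWeight` sums with the classical `Fintype (ι → 𝒳)` instance; `convert` bridges it to the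
-- instance built from `[DecidableEq ι]`, e.g. `instDecidableEqFin` in the main theorem.
variable [Fintype ι] [DecidableEq ι] [Fintype 𝒳]

theorem le_exchWeight {P Q : (ι → 𝒳) → ℝ} {l : ℝ} (hQ : IsProb Q) (hQe : Exchangeable Q)
    (hlQ : ∀ x, l * Q x ≤ P x) : l ≤ exchWeight P :=
  le_csSup ⟨_, fun _ ⟨_, hQ, _, hlQ⟩ => IsProb.mul_le_sum (by convert hQ) hlQ⟩
    ⟨Q, by convert hQ, hQe, hlQ⟩

theorem exchWeight_le {P Q₀ : (ι → 𝒳) → ℝ} {c : ℝ} (hQ₀ : IsProb Q₀) (hQ₀e : Exchangeable Q₀)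
    (hP : ∀ x, 0 ≤ P x)
    (h : ∀ l Q, IsProb Q → Exchangeable Q → (∀ x, l * Q x ≤ P x) → l ≤ c) :
    exchWeight P ≤ c :=
  csSup_le ⟨0, Q₀, by convert hQ₀, hQ₀e, fun x => by simpa using hP x⟩
    fun _ ⟨Q, hQ, hQe, hlQ⟩ => h _ Q (by convert hQ) hQe hlQ

theorem sum_le_exchWeight {P M : (ι → 𝒳) → ℝ} (hM : ∀ x, 0 ≤ M x) (hMe : Exchangeable M)
    (hMP : ∀ x, M x ≤ P x) (hpos : 0 < ∑ x, M x) : ∑ x, M x ≤ exchWeight P := by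
  set s := ∑ x, M x
  refine le_exchWeight (Q := fun x => M x / s) ⟨fun x => div_nonneg (hM x) hpos.le, ?_⟩
    (hMe.map (· / s)) fun x => ?_
  · rw [← Finset.sum_div, div_self hpos.ne']
  · rw [mul_div_cancel₀ _ hpos.ne']
    exact hMP x

theorem sub_le_mul_exchWeight {Q Q' R' : (ι → 𝒳) → ℝ} {β l : ℝ} (hβ1 : β < 1)
    (hQ : IsProb Q) (hQe : Exchangeable Q) (hQ' : IsProb Q') (hQ'e : Exchangeable Q')
    (hR' : ∀ x, 0 ≤ R' x) (hlQ : ∀ x, l * Q x ≤ β * Q' x + (1 - β) * R' x) (hβl : β < l) :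
    l - β ≤ (1 - β) * exchWeight R' := by
  have h1β : 0 < 1 - β := sub_pos.mpr hβ1
  set M : (ι → 𝒳) → ℝ := fun x => max (l * Q x - β * Q' x) 0 / (1 - β)
  have hmass : (l - β) / (1 - β) ≤ ∑ x, M x := by
    calc (l - β) / (1 - β) = (∑ x, (l * Q x - β * Q' x)) / (1 - β) := by
          rw [Finset.sum_sub_distrib, ← Finset.mul_sum, ← Finset.mul_sum, hQ.2, hQ'.2,
            mul_one, mul_one]
      _ ≤ ∑ x, M x := by
          rw [Finset.sum_div]
          exact Finset.sum_le_sum fun x _ =>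
            div_le_div_of_nonneg_right (le_max_left _ _) h1β.le
  have hMR : ∀ x, M x ≤ R' x := fun x =>
    (div_le_iff₀ h1β).2 (max_le (by linarith [hlQ x]) (by nlinarith [hR' x]))
  have hw := sum_le_exchWeight (fun x => div_nonneg (le_max_right _ _) h1β.le)
    ((hQe.map₂ hQ'e fun a b => l * a - β * b).map fun (t : ℝ) => max t 0 / (1 - β)) hMR
    (lt_of_lt_of_le (div_pos (sub_pos.mpr hβl) h1β) hmass)
  rw [← div_le_iff₀' h1β]
  exact hmass.trans hw

end

theorem stmt8_general {𝒳 : Type*} [Fintype 𝒳]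
    {d : ℕ}
    (β : ℝ) (hβ0 : 0 ≤ β) (hβ1 : β ≤ 1)
    (Q' R' P : (Fin d → 𝒳) → ℝ)
    (hQ' : IsProb Q') (hQ'exch : Exchangeable Q')
    (hR' : IsProb R') (hR'w : exchWeight R' = 0)
    (hPdef : ∀ x, P x = β * Q' x + (1 - β) * R' x) :
    exchWeight P = β := by
  have hPsum : ∑ x, P x = 1 := by
    simp only [hPdef, Finset.sum_add_distrib, ← Finset.mul_sum, hQ'.2, hR'.2]
    ring
  have hβQ' : ∀ x, β * Q' x ≤ P x := fun x => by
    rw [hPdef]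
    nlinarith [hQ'.1 x, hR'.1 x]
  refine le_antisymm ?_ (le_exchWeight hQ' hQ'exch hβQ')
  refine exchWeight_le hQ' hQ'exch (fun x => (mul_nonneg hβ0 (hQ'.1 x)).trans (hβQ' x))
    fun l Q hQ hQe hlQ => le_of_not_gt fun hβl => ?_
  have hl1 : l ≤ 1 := hPsum ▸ hQ.mul_le_sum hlQ
  have := sub_le_mul_exchWeight (hβl.trans_le hl1) hQ hQe hQ' hQ'exch hR'.1
    (fun x => hPdef x ▸ hlQ x) hβl
  rw [hR'w, mul_zero] at this
  linarith

/-- Corollary: if `P = β·Q′ + (1−β)·R′` with `Q′` exchangeable, `R′` not exchangeable and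
`λ_ℰ(R′) = 0`, then `λ_ℰ(P) = β`. -/
theorem stmt8 {𝒳 : Type*} [Fintype 𝒳] (hk : 1 < Fintype.card 𝒳)
    {d : ℕ} (hd : 1 < d)
    (β : ℝ) (hβ0 : 0 ≤ β) (hβ1 : β ≤ 1)
    (Q' R' P : (Fin d → 𝒳) → ℝ)
    (hQ' : IsProb Q') (hQ'exch : Exchangeable Q')
    (hR' : IsProb R') (hR'nexch : ¬ Exchangeable R') (hR'w : exchWeight R' = 0)
    (hPdef : ∀ x, P x = β * Q' x + (1 - β) * R' x) :
    exchWeight P = β :=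
  stmt8_general β hβ0 hβ1 Q' R' P hQ' hQ'exch hR' hR'w hPdef
end

section
/- Let 𝒳 be a finite set of cardinality k > 1 and d > 1 finite. For every probability measure P on 𝒳^d and every non-empty subset I ⊆ {1,…,d}, the exchangeable weight of P is a lower bound for the exchangeable weight of the marginal: λ_ℰ(P) ≤ λ_ℰ(P_I), where P_I denotes the marginal distribution of the coordinates indexed by I (a probability measure on 𝒳^{|I|}), and the exchangeable weights are taken with respect to the exchangeable probability measures on 𝒳^d and 𝒳^{|I|}, respectively. -/
open scoped BigOperators Classical

/-- The marginal distribution `P_I` of the coordinates indexed by `I`, a probability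
measure on `𝒳^{|I|}` (with index type the elements of `I`). -/
noncomputable def marginal {𝒳 : Type*} [Fintype 𝒳] {d : ℕ}
    (P : (Fin d → 𝒳) → ℝ) (I : Finset (Fin d)) : (({ i // i ∈ I }) → 𝒳) → ℝ :=
  fun y => ∑ x : Fin d → 𝒳, if (∀ i : { i // i ∈ I }, x i.1 = y i) then P x else 0


lemma sum_univ_eq2 {a M : Type*} [AddCommMonoid M] {i1 i2 : Fintype a} (f : a -> M) :
    @Finset.sum a M _ (@Finset.univ a i1) f = @Finset.sum a M _ (@Finset.univ a i2) f := by
  cases Subsingleton.elim i1 i2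
  rfl

lemma marginal_sum' {𝒳 : Type*} [Fintype 𝒳] {d : ℕ}
    (P : (Fin d → 𝒳) → ℝ) (I : Finset (Fin d)) :
    ∑ y, marginal P I y = ∑ x, P x := by
  unfold marginal
  rw [Finset.sum_comm]
  refine Finset.sum_congr rfl fun x _ => ?_
  rw [Finset.sum_eq_single (fun i : {i // i ∈ I} => x i.1)]
  · simp
  · intro y _ hy
    rw [if_neg]
    intro h
    exact hy (funext fun i => (h i).symm)
  · simp

lemma marginal_exchangeable' {𝒳 : Type*} [Fintype 𝒳] {d : ℕ}
    (Q : (Fin d → 𝒳) → ℝ) (hex : Exchangeable Q) (I : Finset (Fin d)) :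
    Exchangeable (marginal Q I) := by
  intro σ y
  unfold marginal
  set τ : Equiv.Perm (Fin d) := σ.extendDomain (Equiv.refl {i // i ∈ I}) with hτ
  have hτ1 : ∀ i : {i // i ∈ I}, τ i.1 = (σ i).1 := by
    intro i
    have := Equiv.Perm.extendDomain_apply_subtype σ (Equiv.refl {i // i ∈ I}) i.2
    simpa using this
  refine (Fintype.sum_equiv (Equiv.arrowCongr τ.symm (Equiv.refl 𝒳))
    (fun z => if (∀ j : {i // i ∈ I}, z j.1 = y j) then Q z else 0)
    (fun x => if (∀ i : {i // i ∈ I}, x i.1 = (y ∘ σ) i) then Q x else 0) ?_).symm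
  intro z
  have he : (Equiv.arrowCongr τ.symm (Equiv.refl 𝒳)) z = z ∘ τ := by
    funext i; simp [Equiv.arrowCongr]
  rw [he]
  have hcond : (∀ i : {i // i ∈ I}, (z ∘ τ) i.1 = (y ∘ σ) i) ↔
      (∀ j : {i // i ∈ I}, z j.1 = y j) := by
    constructor
    · intro h j
      have := h (σ.symm j)
      simpa [hτ1 (σ.symm j)] using this
    · intro h i
      simpa [hτ1 i] using h (σ i)
  simp only [hcond, hex τ z]

/-- Theorem 5: `λ_ℰ(P) ≤ λ_ℰ(P_I)` for every non-empty `I ⊆ {1,…,d}`. -/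
theorem stmt9 {𝒳 : Type*} [Fintype 𝒳] (hk : 1 < Fintype.card 𝒳)
    {d : ℕ} (hd : 1 < d) (P : (Fin d → 𝒳) → ℝ) (hP : IsProb P)
    (I : Finset (Fin d)) (hI : I.Nonempty) :
    exchWeight P ≤ exchWeight (marginal P I) := by
  have hX : Nonempty 𝒳 := Fintype.card_pos_iff.mp (by omega)
  have hXd : Nonempty (Fin d → 𝒳) := ⟨fun _ => Classical.arbitrary 𝒳⟩
  apply csSup_le_csSup
  · refine ⟨1, ?_⟩
    rintro l ⟨Q, ⟨hQ0, hQ1⟩, -, hle⟩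
    have hQ1' : ∑ y, Q y = 1 := (sum_univ_eq2 Q).trans hQ1
    have hM : ∑ y, marginal P I y = 1 := by rw [marginal_sum', hP.2]
    calc l = l * ∑ y, Q y := by rw [hQ1', mul_one]
      _ = ∑ y, l * Q y := Finset.mul_sum _ _ _
      _ ≤ ∑ y, marginal P I y := Finset.sum_le_sum fun y _ => hle y
      _ = 1 := hM
  · refine ⟨0, (fun _ => (Fintype.card (Fin d → 𝒳) : ℝ)⁻¹),
      ⟨fun _ => inv_nonneg.mpr (Nat.cast_nonneg _), ?_⟩,
      fun σ x => rfl, fun x => by simpa using hP.1 x⟩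
    have h2 : ∑ _ω : Fin d → 𝒳, (Fintype.card (Fin d → 𝒳) : ℝ)⁻¹ = 1 := by
      rw [Finset.sum_const, Finset.card_univ, nsmul_eq_mul, mul_inv_cancel₀]
      exact_mod_cast Fintype.card_ne_zero
    exact (sum_univ_eq2 _).trans h2
  · rintro l ⟨Q, ⟨hQ0, hQ1⟩, hex, hle⟩
    have hQ1' : ∑ y, Q y = 1 := (sum_univ_eq2 Q).trans hQ1
    refine ⟨marginal Q I, ⟨?_, (sum_univ_eq2 _).trans (by rw [marginal_sum', hQ1'])⟩,
      marginal_exchangeable' Q hex I, ?_⟩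
    · intro y
      refine Finset.sum_nonneg fun x _ => ?_
      split_ifs with h
      · exact hQ0 x
      · exact le_rfl
    · intro y
      unfold marginal
      rw [Finset.mul_sum]
      refine Finset.sum_le_sum fun x _ => ?_
      split_ifs with h
      · exact hle x
      · simp
end

section
/- Let 𝒳 and 𝒴 be finite sets, d > 1 finite, r : 𝒳 → 𝒴 a function, and Φ : 𝒳^d → 𝒴^d defined by Φ(x) := (r(x₁),…,r(x_d)). Then for every probability measure P on 𝒳^d, λ_ℰ(P) ≤ λ_ℰ(P ∘ Φ^{-1}), where P ∘ Φ^{-1} is the pushforward measure of P under Φ, and the exchangeable weights are taken with respect to the exchangeable probability measures on 𝒳^d and 𝒴^d, respectively. -/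
open scoped BigOperators Classical

/-- The pushforward measure `P ∘ Φ⁻¹` of `P` under `Φ(x) = (r(x₁),…,r(x_d))`. -/
noncomputable def lump {𝒳 𝒴 : Type*} [Fintype 𝒳] {d : ℕ} (r : 𝒳 → 𝒴)
    (P : (Fin d → 𝒳) → ℝ) : (Fin d → 𝒴) → ℝ :=
  fun y => ∑ x : Fin d → 𝒳, if (fun i => r (x i)) = y then P x else 0

lemma isProb_inst {Ω : Type*} {i j : Fintype Ω} {P : Ω → ℝ} (h : @IsProb Ω i P) :
    @IsProb Ω j P := by
  cases Subsingleton.elim i j; exact h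

lemma lump_isProb {𝒳 𝒴 : Type*} [Fintype 𝒳] [Fintype 𝒴] {d : ℕ} (r : 𝒳 → 𝒴)
    {P : (Fin d → 𝒳) → ℝ} (hP : IsProb P) : IsProb (lump r P) := by
  constructor
  · intro y
    apply Finset.sum_nonneg
    intro x _
    split <;> simp [hP.1 x]
  · unfold lump
    rw [Finset.sum_comm, show (1:ℝ) = ∑ x, P x from hP.2.symm]
    apply Finset.sum_congr rfl
    intro x _
    simp

lemma lump_exch {𝒳 𝒴 : Type*} [Fintype 𝒳] {d : ℕ} (r : 𝒳 → 𝒴)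
    {Q : (Fin d → 𝒳) → ℝ} (hQ : Exchangeable Q) : Exchangeable (lump r Q) := by
  intro σ y
  unfold lump
  apply Fintype.sum_equiv (Equiv.arrowCongr σ (Equiv.refl 𝒳))
  intro x
  have he : (Equiv.arrowCongr σ (Equiv.refl 𝒳)) x = x ∘ ⇑σ.symm := by
    funext i; rfl
  rw [he]
  have hcond : ((fun i => r (x i)) = y ∘ σ) ↔ ((fun i => r ((x ∘ ⇑σ.symm) i)) = y) := by
    constructor
    · intro h; funext i
      have := congrFun h (σ.symm i)
      simpa using this
    · intro h; funext i
      have := congrFun h (σ i)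
      simpa using this
  have hQx : Q (x ∘ ⇑σ.symm) = Q x := hQ σ.symm x
  by_cases hc : (fun i => r (x i)) = y ∘ σ
  · rw [if_pos hc, if_pos (hcond.mp hc), hQx]
  · rw [if_neg hc, if_neg (fun h => hc (hcond.mpr h))]

/-- Theorem 7 (lumping): `λ_ℰ(P) ≤ λ_ℰ(P ∘ Φ⁻¹)`. -/
theorem stmt11 {𝒳 𝒴 : Type*} [Fintype 𝒳] [Fintype 𝒴]
    {d : ℕ} (hd : 1 < d) (r : 𝒳 → 𝒴)
    (P : (Fin d → 𝒳) → ℝ) (hP : IsProb P) :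
    exchWeight P ≤ exchWeight (lump r P) := by
  have hne : Nonempty (Fin d → 𝒳) := by
    by_contra h
    rw [not_nonempty_iff] at h
    have : ∑ x : Fin d → 𝒳, P x = 0 := by simp
    rw [hP.2] at this; norm_num at this
  apply csSup_le_csSup
  · -- bounded above by 1
    refine ⟨1, ?_⟩
    rintro l ⟨Q, hQp, _, hle⟩
    have hQp' : IsProb Q := isProb_inst hQp
    have hL : IsProb (lump r P) := lump_isProb r hP
    have hsum : ∑ x, l * Q x ≤ ∑ x, lump r P x :=
      Finset.sum_le_sum (fun x _ => hle x)
    rw [← Finset.mul_sum, hQp'.2, mul_one, hL.2] at hsum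
    exact hsum
  · -- nonempty: l = 0 with the uniform measure
    have hu : IsProb (fun _ : Fin d → 𝒳 => (Fintype.card (Fin d → 𝒳) : ℝ)⁻¹) := by
      constructor
      · intro x; positivity
      · rw [Finset.sum_const, Finset.card_univ, nsmul_eq_mul]
        have : (Fintype.card (Fin d → 𝒳) : ℝ) ≠ 0 := by
          exact_mod_cast Fintype.card_ne_zero
        rw [mul_inv_cancel₀ this]
    exact ⟨0, fun _ => (Fintype.card (Fin d → 𝒳) : ℝ)⁻¹, isProb_inst hu,
      fun σ x => rfl, fun x => by rw [zero_mul]; exact hP.1 x⟩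
  · rintro l ⟨Q, hQp, hQe, hle⟩
    have hQp' : IsProb Q := isProb_inst hQp
    refine ⟨lump r Q, isProb_inst (lump_isProb r hQp'), lump_exch r hQe, ?_⟩
    intro y
    show l * lump r Q y ≤ lump r P y
    unfold lump
    rw [Finset.mul_sum]
    apply Finset.sum_le_sum
    intro x _
    by_cases hc : (fun i => r (x i)) = y
    · rw [if_pos hc, if_pos hc]; exact hle x
    · rw [if_neg hc, if_neg hc, mul_zero]
end
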